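/- arXiv:2009.01037 — 2 statements merged into one kernel-verified Lean document; each statement's English description precedes it below -/
import Mathlib

section
/- The function f(x₁,x₂) = max{x₁⁴ + x₂², (2−x₁)² + (2−x₂)², 2·exp(x₂−x₁)} on ℝ² attains its global minimum value 2 at the point (1,1). -/
lemma cb3_key (x₁ x₂ : ℝ) (h1 : x₂ ≤ x₁) (h2 : (2 - x₁) ^ 2 + (2 - x₂) ^ 2 ≤ 2) :
    2 ≤ x₁ ^ 4 + x₂ ^ 2 := by
  nlinarith [sq_nonneg (x₁ - 1), sq_nonneg (x₂ - 1), sq_nonneg (x₁ - x₂),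
    sq_nonneg (x₁ + x₂ - 2), sq_nonneg (x₁ ^ 2 - 1), sq_nonneg (x₁ ^ 2 + x₁ - 2),
    mul_nonneg (sub_nonneg.2 h1) (sq_nonneg (x₁ - 1))]

/-- CB3: f(x₁,x₂) = max{x₁⁴ + x₂², (2−x₁)² + (2−x₂)², 2·exp(x₂−x₁)} attains its
global minimum value 2 at (1,1). -/
theorem cb3_min (f : ℝ → ℝ → ℝ)
    (hf : ∀ x₁ x₂, f x₁ x₂ =
      max (max (x₁ ^ 4 + x₂ ^ 2) ((2 - x₁) ^ 2 + (2 - x₂) ^ 2)) (2 * Real.exp (x₂ - x₁))) :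
    f 1 1 = 2 ∧ ∀ x₁ x₂, 2 ≤ f x₁ x₂ := by
  constructor
  · rw [hf]; norm_num
  · intro x₁ x₂
    rw [hf]
    rcases le_or_gt x₁ x₂ with h | h
    · refine le_max_of_le_right ?_
      have : (1 : ℝ) ≤ Real.exp (x₂ - x₁) := by
        rw [← Real.exp_zero]; exact Real.exp_le_exp.2 (by linarith)
      linarith
    · rcases le_or_gt ((2 - x₁) ^ 2 + (2 - x₂) ^ 2) 2 with h2 | h2
      · exact le_max_of_le_left (le_max_of_le_left (cb3_key x₁ x₂ h.le h2))
      · exact le_max_of_le_left (le_max_of_le_right h2.le)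
end

section
/- The function f(x₁,x₂) = max{5x₁ + x₂, −5x₁ + x₂, x₁² + x₂² + 4x₂} on ℝ² has global minimum value −3. -/
/-- DEM: f(x₁,x₂) = max{5x₁+x₂, −5x₁+x₂, x₁²+x₂²+4x₂} has global minimum value −3. -/
theorem dem_min (f : ℝ → ℝ → ℝ)
    (hf : ∀ x₁ x₂, f x₁ x₂ =
      max (max (5 * x₁ + x₂) (-5 * x₁ + x₂)) (x₁ ^ 2 + x₂ ^ 2 + 4 * x₂)) :
    IsLeast {v : ℝ | ∃ x₁ x₂, f x₁ x₂ = v} (-3) := by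
  constructor
  · exact ⟨0, -3, by rw [hf]; norm_num⟩
  · rintro v ⟨x₁, x₂, rfl⟩
    rw [hf]
    rcases le_or_gt (-3) x₂ with h | h
    · refine le_trans ?_ (le_max_left _ _)
      rcases le_or_gt 0 x₁ with hx | hx
      · refine le_trans ?_ (le_max_left _ _); linarith
      · refine le_trans ?_ (le_max_right _ _); linarith
    · refine le_trans ?_ (le_max_right _ _)
      nlinarith [sq_nonneg x₁, sq_nonneg (x₂ + 3)]
end
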